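/- Let k be a field of characteristic p > 0 and V a finite-dimensional k-vector space. Let q : V^{⊗p} → Sᵖ(V) be the quotient map onto the p-th symmetric power, and let N : V^{⊗p} → V^{⊗p} be the symmetrization operator N(x) = Σ_{σ ∈ S_p} σ·x. Then N(x − σ·x) = 0 for all x and σ, the image of N lies in Γᵖ(V) = (V^{⊗p})^{S_p}, and hence N induces a k-linear map α_V : Sᵖ(V) → Γᵖ(V). Moreover: (i) the kernel of α_V equals the k-linear span of the elements q(v^{⊗p}) for v ∈ V; (ii) dim ker(α_V) = dim V; and (iii) dim(Γᵖ(V)/im(α_V)) = dim V. -/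

import Mathlib

/-!
Choose a basis `(bᵢ)_{i ∈ ι}` of `V`. The tensors `b_f = b_{f 0} ⊗ ⋯ ⊗ b_{f (p-1)}`, for
`f : Fin p → ι`, form a basis of `V^{⊗p}` which `S_p` permutes. Hence `Sᵖ(V)` has a basis of
classes `[b_f]`, one for each `S_p`-orbit of index functions, and `Γᵖ(V)` has the basis of
orbit sums. In these bases `α` is diagonal: `N(b_f) = |Stab f| • (orbit sum of f)`. The
stabilizer of `f` is the product of the symmetric groups of the fibres of `f`, of order
`∏ nᵢ!`, which the prime `p` divides exactly when `f` is constant. So `ker α` is spanned by the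
classes of the `bᵢ^{⊗p}` and has dimension `dim V`; as `Sᵖ(V)` and `Γᵖ(V)` both have dimension
the number of orbits, the cokernel has the same dimension as the kernel.
-/

open scoped TensorProduct
open PiTensorProduct

/-- The action of a permutation `σ ∈ S_p` on the `p`-th tensor power `V^{⊗p}`,
permuting the tensor factors. -/
noncomputable def permAction (k : Type*) [CommSemiring k] (V : Type*) [AddCommGroup V]
    [Module k V] {n : ℕ} (σ : Equiv.Perm (Fin n)) :
    (⨂[k]^n V) ≃ₗ[k] (⨂[k]^n V) :=
  PiTensorProduct.reindex k (fun _ => V) σ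

/-- The `p`-th divided power `Γᵖ(V)`: the subspace of `S_p`-invariant tensors in the
`p`-th tensor power `V^{⊗p}`. -/
noncomputable def dividedPower (k : Type*) [CommSemiring k] (V : Type*) [AddCommGroup V]
    [Module k V] (n : ℕ) : Submodule k (⨂[k]^n V) :=
  ⨅ σ : Equiv.Perm (Fin n), LinearMap.eqLocus (permAction k V σ).toLinearMap LinearMap.id

/-- The subspace of `V^{⊗p}` spanned by the elements `x - σ·x`; the `p`-th symmetric
power `Sᵖ(V)` is the quotient of `V^{⊗p}` by this subspace, and `q` below is the
quotient map. -/
noncomputable def symRelations (k : Type*) [CommRing k] (V : Type*) [AddCommGroup V]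
    [Module k V] (n : ℕ) : Submodule k (⨂[k]^n V) :=
  Submodule.span k
    {z | ∃ (x : ⨂[k]^n V) (σ : Equiv.Perm (Fin n)), z = x - permAction k V σ x}

/-- The symmetrization operator `N(x) = Σ_{σ ∈ S_p} σ·x` on `V^{⊗p}`. -/
noncomputable def symmetrization (k : Type*) [CommRing k] (V : Type*) [AddCommGroup V]
    [Module k V] (p : ℕ) : (⨂[k]^p V) →ₗ[k] (⨂[k]^p V) :=
  ∑ σ : Equiv.Perm (Fin p), (permAction k V σ).toLinearMap

lemma LinearMap.ker_eq_span_image_of_apply_basis_eq_smul {R M N O : Type*} [Ring R]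
    [NoZeroDivisors R] [AddCommGroup M] [Module R M] [AddCommGroup N] [Module R N] [Fintype O]
    (f : M →ₗ[R] N) (e : Module.Basis O R M) {u : O → N} (hu : LinearIndependent R u)
    (c : O → R) (hf : ∀ o, f (e o) = c o • u o) :
    LinearMap.ker f = Submodule.span R (e '' {o | c o = 0}) := by
  ext x
  have hfx : f x = ∑ o, (e.repr x o * c o) • u o := by
    conv_lhs => rw [← e.sum_repr x]
    simp only [map_sum, map_smul, hf, smul_smul]
  rw [LinearMap.mem_ker, e.mem_span_image, hfx]
  refine ⟨fun h o ho => ?_, fun h => ?_⟩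
  · exact (mul_eq_zero.1 (Fintype.linearIndependent_iff.1 hu _ h o)).resolve_left
      (Finsupp.mem_support_iff.1 ho)
  · refine Finset.sum_eq_zero fun o _ => ?_
    by_cases ho : e.repr x o = 0
    · simp [ho]
    · simp [show c o = 0 from h (Finsupp.mem_support_iff.2 ho)]

lemma LinearMap.finrank_quotient_range_eq_finrank_ker {K M N : Type*} [Field K]
    [AddCommGroup M] [Module K M] [AddCommGroup N] [Module K N]
    [FiniteDimensional K M] [FiniteDimensional K N] (f : M →ₗ[K] N)
    (h : Module.finrank K M = Module.finrank K N) :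
    Module.finrank K (N ⧸ LinearMap.range f) = Module.finrank K (LinearMap.ker f) := by
  have := Submodule.finrank_quotient_add_finrank (LinearMap.range f)
  have := LinearMap.finrank_range_add_finrank_ker f
  omega

lemma Nat.Prime.dvd_card_stabilizer_iff {ι : Type*} [Fintype ι] [DecidableEq ι] {p : ℕ}
    (hp : p.Prime) (f : Fin p → ι) :
    p ∣ Fintype.card {σ : Equiv.Perm (Fin p) // f ∘ σ = f} ↔ ∃ i, f = fun _ => i := by
  simp only [DomMulAct.stabilizer_card, Prime.dvd_finsetProd_iff hp.prime, Finset.mem_univ,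
    true_and, hp.dvd_factorial]
  refine exists_congr fun i => ⟨fun hle => funext fun a => ?_, ?_⟩
  · by_contra hne
    exact ((Fintype.card_subtype_lt (p := (f · = i)) hne).trans_eq (Fintype.card_fin p)).not_ge
      hle
  · rintro rfl
    simp

abbrev permSetoid (p : ℕ) (ι : Type*) : Setoid (Fin p → ι) where
  r f g := ∃ σ : Equiv.Perm (Fin p), f ∘ σ = g
  iseqv :=
    ⟨fun _ => ⟨1, rfl⟩,
     fun ⟨σ, h⟩ => ⟨σ⁻¹, by rw [← h]; ext; simp⟩,
     fun ⟨σ, h⟩ ⟨τ, h'⟩ => ⟨σ * τ, by rw [← h', ← h]; rfl⟩⟩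

attribute [local instance] permSetoid

abbrev PermOrbits (p : ℕ) (ι : Type*) := Quotient (permSetoid p ι)

instance {p : ℕ} {ι : Type*} [DecidableEq ι] : DecidableRel (permSetoid p ι).r :=
  fun f g => inferInstanceAs (Decidable (∃ σ : Equiv.Perm (Fin p), f ∘ σ = g))

namespace PermOrbits

variable {p : ℕ} {ι : Type*}

@[simp]
lemma mk_comp (f : Fin p → ι) (σ : Equiv.Perm (Fin p)) :
    (⟦f ∘ σ⟧ : PermOrbits p ι) = ⟦f⟧ :=
  Quotient.sound ⟨σ⁻¹, by ext; simp⟩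

lemma exists_comp_eq_out (f : Fin p → ι) :
    ∃ σ : Equiv.Perm (Fin p), f ∘ σ = (⟦f⟧ : PermOrbits p ι).out :=
  Setoid.symm (Quotient.mk_out f)

lemma out_eq_const_iff (o : PermOrbits p ι) (i : ι) :
    o.out = (fun _ => i) ↔ ⟦fun _ : Fin p => i⟧ = o := by
  refine ⟨fun h => h ▸ Quotient.out_eq o, ?_⟩
  rintro rfl
  obtain ⟨σ, hσ⟩ := exists_comp_eq_out (fun _ : Fin p => i)
  exact hσ.symm

lemma mk_const_injective (hp : 0 < p) :
    Function.Injective fun i : ι => (⟦fun _ : Fin p => i⟧ : PermOrbits p ι) :=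
  fun i j hij => by
  obtain ⟨σ, hσ⟩ := Quotient.exact hij
  exact congrFun hσ ⟨0, hp⟩

lemma card_comp_symm_eq (f g : Fin p → ι) [DecidableEq ι] :
    Fintype.card {σ : Equiv.Perm (Fin p) // f ∘ σ.symm = g} =
      if (⟦g⟧ : PermOrbits p ι) = ⟦f⟧ then
        Fintype.card {σ : Equiv.Perm (Fin p) // f ∘ σ = f}
      else 0 := by
  split_ifs with h
  · obtain ⟨τ, rfl⟩ : ∃ τ : Equiv.Perm (Fin p), f ∘ τ = g := Quotient.exact h.symm
    refine Fintype.card_congr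
      (Equiv.subtypeEquiv ((Equiv.inv _).trans (Equiv.mulRight τ⁻¹)) fun σ => ?_)
    simp only [Equiv.trans_apply, Equiv.inv_apply, Equiv.coe_mulRight, Equiv.Perm.coe_mul,
      Equiv.Perm.inv_def, ← Function.comp_assoc, Equiv.comp_symm_eq]
  · refine Fintype.card_eq_zero_iff.2 ⟨fun ⟨σ, hσ⟩ => h ?_⟩
    rw [← hσ, mk_comp]

end PermOrbits

section Action

variable (k : Type*) [CommRing k] (V : Type*) [AddCommGroup V] [Module k V] {p : ℕ}

@[simp]
lemma permAction_tprod (σ : Equiv.Perm (Fin p)) (v : Fin p → V) :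
    permAction k V σ (tprod k v) = tprod k (v ∘ σ.symm) :=
  reindex_tprod σ v

lemma permAction_permAction (σ τ : Equiv.Perm (Fin p)) (x : ⨂[k]^p V) :
    permAction k V τ (permAction k V σ x) = permAction k V (τ * σ) x :=
  reindex_reindex σ τ x

lemma symmetrization_apply (x : ⨂[k]^p V) :
    symmetrization k V p x = ∑ σ : Equiv.Perm (Fin p), permAction k V σ x := by
  simp [symmetrization, LinearMap.sum_apply]

lemma mem_dividedPower_iff {x : ⨂[k]^p V} :
    x ∈ dividedPower k V p ↔ ∀ σ : Equiv.Perm (Fin p), permAction k V σ x = x := by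
  simp [dividedPower]

lemma symmetrization_permAction (σ : Equiv.Perm (Fin p)) (x : ⨂[k]^p V) :
    symmetrization k V p (permAction k V σ x) = symmetrization k V p x := by
  simp only [symmetrization_apply, permAction_permAction]
  exact Fintype.sum_equiv (Equiv.mulRight σ) _ _ fun _ => rfl

lemma permAction_symmetrization (σ : Equiv.Perm (Fin p)) (x : ⨂[k]^p V) :
    permAction k V σ (symmetrization k V p x) = symmetrization k V p x := by
  simp only [symmetrization_apply, map_sum, permAction_permAction]
  exact Fintype.sum_equiv (Equiv.mulLeft σ) _ _ fun _ => rfl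

lemma symmetrization_mem_dividedPower (x : ⨂[k]^p V) :
    symmetrization k V p x ∈ dividedPower k V p :=
  (mem_dividedPower_iff k V).2 fun σ => permAction_symmetrization k V σ x

lemma symRelations_le_ker_symmetrization :
    symRelations k V p ≤ LinearMap.ker (symmetrization k V p) := by
  rw [symRelations, Submodule.span_le]
  rintro _ ⟨x, σ, rfl⟩
  simp [symmetrization_permAction]

lemma symmetrization_tprod_const (v : V) :
    symmetrization k V p (tprod k fun _ => v) = p.factorial • tprod k fun _ => v := by
  simp [symmetrization_apply, Function.comp_def, Fintype.card_perm]

lemma symmetrization_tprod_const_eq_zero [CharP k p] (hp : 0 < p) (v : V) :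
    symmetrization k V p (tprod k fun _ => v) = 0 := by
  rw [symmetrization_tprod_const, ← Nat.cast_smul_eq_nsmul k,
    CharP.cast_eq_zero_iff k p _ |>.2 (Nat.dvd_factorial hp le_rfl), zero_smul]

/-- The map `α_V : Sᵖ(V) → Γᵖ(V)` induced by the symmetrization operator. -/
noncomputable def symToDividedPower (p : ℕ) :
    (⨂[k]^p V) ⧸ symRelations k V p →ₗ[k] dividedPower k V p :=
  (symRelations k V p).liftQ
    ((symmetrization k V p).codRestrict _ (symmetrization_mem_dividedPower k V))
    (by rw [LinearMap.ker_codRestrict]; exact symRelations_le_ker_symmetrization k V)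

@[simp]
lemma symToDividedPower_mk (x : ⨂[k]^p V) :
    (symToDividedPower k V p (Submodule.Quotient.mk x) : ⨂[k]^p V) = symmetrization k V p x :=
  rfl

end Action

section TensorPowerBasis

variable {k : Type*} [CommRing k] {V : Type*} [AddCommGroup V] [Module k V]
  {ι : Type*} (b : Module.Basis ι k V) (p : ℕ)

noncomputable def tensorPowerBasis : Module.Basis (Fin p → ι) k (⨂[k]^p V) :=
  Basis.piTensorProduct fun _ => b

lemma tensorPowerBasis_apply (f : Fin p → ι) :
    tensorPowerBasis b p f = tprod k fun i => b (f i) :=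
  Basis.piTensorProduct_apply _ f

variable {p}

lemma permAction_tensorPowerBasis (σ : Equiv.Perm (Fin p)) (f : Fin p → ι) :
    permAction k V σ (tensorPowerBasis b p f) = tensorPowerBasis b p (f ∘ σ.symm) := by
  simp only [tensorPowerBasis_apply, permAction_tprod]
  rfl

lemma tensorPowerBasis_repr_permAction (σ : Equiv.Perm (Fin p)) (x : ⨂[k]^p V)
    (f : Fin p → ι) :
    (tensorPowerBasis b p).repr (permAction k V σ x) f =
      (tensorPowerBasis b p).repr x (f ∘ σ) := by
  have : (tensorPowerBasis b p).coord f ∘ₗ (permAction k V σ).toLinearMap =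
      (tensorPowerBasis b p).coord (f ∘ σ) := by
    classical
    refine (tensorPowerBasis b p).ext fun g => ?_
    simp only [LinearMap.comp_apply, LinearEquiv.coe_coe, permAction_tensorPowerBasis,
      Module.Basis.coord_apply, Module.Basis.repr_self, Finsupp.single_apply,
      Equiv.comp_symm_eq]
  exact LinearMap.congr_fun this x

lemma mem_dividedPower_iff_repr {x : ⨂[k]^p V} :
    x ∈ dividedPower k V p ↔
      ∀ (σ : Equiv.Perm (Fin p)) (f : Fin p → ι),
        (tensorPowerBasis b p).repr x (f ∘ σ) = (tensorPowerBasis b p).repr x f := by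
  refine (mem_dividedPower_iff k V).trans (forall_congr' fun σ => ?_)
  rw [← (tensorPowerBasis b p).repr.injective.eq_iff, Finsupp.ext_iff]
  simp only [tensorPowerBasis_repr_permAction]

end TensorPowerBasis

section SymmetricPowerBasis

variable {k : Type*} [CommRing k] {V : Type*} [AddCommGroup V] [Module k V]
  {ι : Type*} (b : Module.Basis ι k V) {p : ℕ}

lemma mk_tensorPowerBasis_out (f : Fin p → ι) :
    (Submodule.Quotient.mk (tensorPowerBasis b p (⟦f⟧ : PermOrbits p ι).out) :
      (⨂[k]^p V) ⧸ symRelations k V p) = Submodule.Quotient.mk (tensorPowerBasis b p f) := by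
  obtain ⟨σ, hσ⟩ := PermOrbits.exists_comp_eq_out f
  rw [eq_comm, Submodule.Quotient.eq, ← hσ, ← Equiv.symm_symm σ,
    ← permAction_tensorPowerBasis]
  exact Submodule.subset_span ⟨_, _, rfl⟩

lemma span_mk_tensorPowerBasis_out :
    Submodule.span k (Set.range fun o : PermOrbits p ι =>
      (Submodule.Quotient.mk (tensorPowerBasis b p o.out) :
        (⨂[k]^p V) ⧸ symRelations k V p)) = ⊤ := by
  refine eq_top_iff.2 ?_
  have hspan : (Submodule.span k (Set.range (tensorPowerBasis b p))).map
      (symRelations k V p).mkQ = ⊤ := by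
    rw [Module.Basis.span_eq, Submodule.map_top, Submodule.range_mkQ]
  rw [← hspan, Submodule.map_span, Submodule.span_le, ← Set.range_comp]
  rintro _ ⟨f, rfl⟩
  exact Submodule.subset_span ⟨⟦f⟧, mk_tensorPowerBasis_out b f⟩

variable [Fintype ι] [DecidableEq ι]

noncomputable def orbitCoordSum : (⨂[k]^p V) →ₗ[k] (PermOrbits p ι → k) :=
  LinearMap.pi fun o => ∑ f with ⟦f⟧ = o, (tensorPowerBasis b p).coord f

lemma orbitCoordSum_tensorPowerBasis (f : Fin p → ι) :
    orbitCoordSum b (tensorPowerBasis b p f) = Pi.single ⟦f⟧ 1 := by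
  ext o
  simp [orbitCoordSum, Finsupp.single_apply, Pi.single_apply, eq_comm]

lemma orbitCoordSum_permAction (σ : Equiv.Perm (Fin p)) (x : ⨂[k]^p V) :
    orbitCoordSum b (permAction k V σ x) = orbitCoordSum b x := by
  have : orbitCoordSum b ∘ₗ (permAction k V σ).toLinearMap = orbitCoordSum b :=
    (tensorPowerBasis b p).ext fun f => by
      simp [permAction_tensorPowerBasis, orbitCoordSum_tensorPowerBasis]
  exact LinearMap.congr_fun this x

lemma symRelations_le_ker_orbitCoordSum :
    symRelations k V p ≤ LinearMap.ker (orbitCoordSum b) := by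
  rw [symRelations, Submodule.span_le]
  rintro _ ⟨x, σ, rfl⟩
  simp [orbitCoordSum_permAction]

lemma linearIndependent_mk_tensorPowerBasis_out :
    LinearIndependent k fun o : PermOrbits p ι =>
      (Submodule.Quotient.mk (tensorPowerBasis b p o.out) :
        (⨂[k]^p V) ⧸ symRelations k V p) := by
  refine LinearIndependent.of_comp
    ((symRelations k V p).liftQ _ (symRelations_le_ker_orbitCoordSum b)) ?_
  simpa [Function.comp_def, orbitCoordSum_tensorPowerBasis]
    using Pi.linearIndependent_single_one (PermOrbits p ι) k

noncomputable def symPowerBasis :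
    Module.Basis (PermOrbits p ι) k ((⨂[k]^p V) ⧸ symRelations k V p) :=
  .mk (linearIndependent_mk_tensorPowerBasis_out b) (span_mk_tensorPowerBasis_out b).ge

lemma symPowerBasis_mk (f : Fin p → ι) :
    symPowerBasis b ⟦f⟧ = Submodule.Quotient.mk (tensorPowerBasis b p f) := by
  simp [symPowerBasis, mk_tensorPowerBasis_out]

end SymmetricPowerBasis

section DividedPowerBasis

variable {k : Type*} [CommRing k] {V : Type*} [AddCommGroup V] [Module k V]
  {ι : Type*} [Fintype ι] [DecidableEq ι] (b : Module.Basis ι k V) {p : ℕ}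

noncomputable def orbitSum (o : PermOrbits p ι) : ⨂[k]^p V :=
  ∑ f with ⟦f⟧ = o, tensorPowerBasis b p f

lemma tensorPowerBasis_repr_orbitSum (o : PermOrbits p ι) (f : Fin p → ι) :
    (tensorPowerBasis b p).repr (orbitSum b o) f = if ⟦f⟧ = o then 1 else 0 := by
  simp [orbitSum, Finsupp.single_apply]

lemma orbitSum_mem_dividedPower (o : PermOrbits p ι) : orbitSum b o ∈ dividedPower k V p :=
  (mem_dividedPower_iff_repr b).2 fun σ f => by simp [tensorPowerBasis_repr_orbitSum]

lemma sum_repr_out_smul_orbitSum {x : ⨂[k]^p V} (hx : x ∈ dividedPower k V p) :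
    ∑ o : PermOrbits p ι, (tensorPowerBasis b p).repr x o.out • orbitSum b o = x := by
  refine (tensorPowerBasis b p).ext_elem fun f => ?_
  simp only [map_sum, map_smul, Finsupp.coe_finsetSum, Finsupp.coe_smul, Finset.sum_apply,
    Pi.smul_apply, tensorPowerBasis_repr_orbitSum, smul_eq_mul, mul_ite, mul_one, mul_zero,
    Finset.sum_ite_eq, Finset.mem_univ, if_true]
  obtain ⟨σ, hσ⟩ := PermOrbits.exists_comp_eq_out f
  rw [← hσ, (mem_dividedPower_iff_repr b).1 hx]

lemma linearIndependent_orbitSum : LinearIndependent k (orbitSum b (p := p)) := by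
  refine LinearIndependent.of_comp
    (LinearMap.pi fun o : PermOrbits p ι => (tensorPowerBasis b p).coord o.out) ?_
  have : ∀ o, (LinearMap.pi fun o : PermOrbits p ι => (tensorPowerBasis b p).coord o.out)
      (orbitSum b o) = Pi.single o 1 := fun o => by
    ext o'
    simp [tensorPowerBasis_repr_orbitSum, Pi.single_apply]
  simpa [Function.comp_def, this] using Pi.linearIndependent_single_one (PermOrbits p ι) k

noncomputable def dividedPowerBasis : Module.Basis (PermOrbits p ι) k (dividedPower k V p) :=
  .mk (v := fun o => ⟨orbitSum b o, orbitSum_mem_dividedPower b o⟩)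
    (.of_comp (dividedPower k V p).subtype (linearIndependent_orbitSum b))
    (by
      rintro ⟨x, hx⟩ -
      have : ⟨x, hx⟩ = ∑ o : PermOrbits p ι, (tensorPowerBasis b p).repr x o.out •
          (⟨orbitSum b o, orbitSum_mem_dividedPower b o⟩ : dividedPower k V p) :=
        Subtype.ext (by simp [sum_repr_out_smul_orbitSum b hx])
      rw [this]
      exact Submodule.sum_mem _ fun o _ =>
        Submodule.smul_mem _ _ (Submodule.subset_span ⟨o, rfl⟩))

@[simp]
lemma coe_dividedPowerBasis (o : PermOrbits p ι) :
    (dividedPowerBasis b o : ⨂[k]^p V) = orbitSum b o := by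
  simp [dividedPowerBasis]

lemma symmetrization_tensorPowerBasis (f : Fin p → ι) :
    symmetrization k V p (tensorPowerBasis b p f) =
      Fintype.card {σ : Equiv.Perm (Fin p) // f ∘ σ = f} • orbitSum b ⟦f⟧ := by
  refine (tensorPowerBasis b p).ext_elem fun g => ?_
  simp only [symmetrization_apply, permAction_tensorPowerBasis, map_sum, Module.Basis.repr_self,
    Finsupp.coe_finsetSum, Finset.sum_apply, Finsupp.single_apply, Finset.sum_boole, map_nsmul,
    Finsupp.coe_smul, Pi.smul_apply, tensorPowerBasis_repr_orbitSum, smul_ite, nsmul_eq_mul,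
    mul_one]
  rw [← Fintype.card_subtype, PermOrbits.card_comp_symm_eq]
  split_ifs <;> simp

end DividedPowerBasis

section CharP

variable {k : Type*} [Field k] {V : Type*} [AddCommGroup V] [Module k V] {p : ℕ}

section Basis

variable {ι : Type*} [Fintype ι] [DecidableEq ι] (b : Module.Basis ι k V)

lemma symToDividedPower_symPowerBasis (o : PermOrbits p ι) :
    symToDividedPower k V p (symPowerBasis b o) =
      (Fintype.card {σ : Equiv.Perm (Fin p) // o.out ∘ σ = o.out} : k) •
        dividedPowerBasis b o := by
  conv_lhs => rw [← Quotient.out_eq o, symPowerBasis_mk]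
  ext
  simp [symmetrization_tensorPowerBasis, Nat.cast_smul_eq_nsmul]

lemma symPowerBasis_mk_const (i : ι) :
    symPowerBasis b ⟦fun _ : Fin p => i⟧ = Submodule.Quotient.mk (tprod k fun _ => b i) := by
  rw [symPowerBasis_mk, tensorPowerBasis_apply]

lemma ker_symToDividedPower [CharP k p] (hp : p.Prime) :
    LinearMap.ker (symToDividedPower k V p) =
      Submodule.span k
        (Set.range fun i => Submodule.Quotient.mk (tprod k fun _ : Fin p => b i)) := by
  have hzero : {o : PermOrbits p ι |
      (Fintype.card {σ : Equiv.Perm (Fin p) // o.out ∘ σ = o.out} : k) = 0} =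
      Set.range fun i => ⟦fun _ => i⟧ := by
    ext o
    simp [CharP.cast_eq_zero_iff k p, hp.dvd_card_stabilizer_iff, PermOrbits.out_eq_const_iff]
  rw [LinearMap.ker_eq_span_image_of_apply_basis_eq_smul _ (symPowerBasis b)
    (dividedPowerBasis b).linearIndependent _ (symToDividedPower_symPowerBasis b), hzero,
    ← Set.range_comp]
  simp only [Function.comp_def, symPowerBasis_mk_const]

end Basis

variable (k V) [FiniteDimensional k V] [CharP k p]

lemma ker_symToDividedPower_eq_span_tprod_const (hp : p.Prime) :
    LinearMap.ker (symToDividedPower k V p) =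
      Submodule.span k
        (Set.range fun v : V => Submodule.Quotient.mk (tprod k fun _ : Fin p => v)) := by
  refine le_antisymm ?_ (Submodule.span_le.2 ?_)
  · rw [ker_symToDividedPower (Module.finBasis k V) hp]
    exact Submodule.span_mono (Set.range_subset_iff.2 fun i => ⟨_, rfl⟩)
  · rintro _ ⟨v, rfl⟩
    exact Subtype.ext (symmetrization_tprod_const_eq_zero k V hp.pos v)

lemma finrank_ker_symToDividedPower (hp : p.Prime) :
    Module.finrank k (LinearMap.ker (symToDividedPower k V p)) = Module.finrank k V := by
  let b := Module.finBasis k V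
  rw [ker_symToDividedPower b hp, finrank_span_eq_card, Fintype.card_fin]
  simpa [Function.comp_def, symPowerBasis_mk_const] using
    (symPowerBasis b).linearIndependent.comp _ (PermOrbits.mk_const_injective hp.pos)

lemma finrank_quotient_range_symToDividedPower (hp : p.Prime) :
    Module.finrank k (dividedPower k V p ⧸ LinearMap.range (symToDividedPower k V p)) =
      Module.finrank k V := by
  let b := Module.finBasis k V
  have := (symPowerBasis (p := p) b).finiteDimensional_of_finite
  have := (dividedPowerBasis (p := p) b).finiteDimensional_of_finite
  rw [LinearMap.finrank_quotient_range_eq_finrank_ker, finrank_ker_symToDividedPower k V hp]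
  rw [Module.finrank_eq_card_basis (symPowerBasis b),
    Module.finrank_eq_card_basis (dividedPowerBasis b)]

end CharP

/-- let `k` be a field of characteristic `p > 0` and `V` a
finite-dimensional `k`-vector space. The symmetrization operator `N` kills all elements
`x - σ·x`, has image inside `Γᵖ(V)`, and hence induces a map `α_V : Sᵖ(V) → Γᵖ(V)`.
Moreover (i) the kernel of `α_V` is the span of the classes `q(v^{⊗p})` (`v ∈ V`);
(ii) `dim ker(α_V) = dim V`; and (iii) `dim (Γᵖ(V) / im(α_V)) = dim V`. -/
theorem stmt_6 {k : Type*} [Field k] (p : ℕ) [CharP k p] (hp : 0 < p)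
    (V : Type*) [AddCommGroup V] [Module k V] [FiniteDimensional k V] :
    (∀ (x : ⨂[k]^p V) (σ : Equiv.Perm (Fin p)),
      symmetrization k V p (x - permAction k V σ x) = 0) ∧
    (∀ x : ⨂[k]^p V, symmetrization k V p x ∈ dividedPower k V p) ∧
    ∃ α : ((⨂[k]^p V) ⧸ symRelations k V p) →ₗ[k] dividedPower k V p,
      (∀ x : ⨂[k]^p V,
        (α (Submodule.Quotient.mk x) : ⨂[k]^p V) = symmetrization k V p x) ∧
      LinearMap.ker α = Submodule.span k
        (Set.range fun v : V =>
          (Submodule.Quotient.mk (PiTensorProduct.tprod k fun _ : Fin p => v) :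
            (⨂[k]^p V) ⧸ symRelations k V p)) ∧
      Module.finrank k (LinearMap.ker α) = Module.finrank k V ∧
      Module.finrank k (↥(dividedPower k V p) ⧸ LinearMap.range α) =
        Module.finrank k V := by
  have hprime : p.Prime := CharP.char_prime_of_ne_zero k hp.ne'
  exact ⟨fun x σ => by rw [map_sub, symmetrization_permAction, sub_self],
    symmetrization_mem_dividedPower k V, symToDividedPower k V p, symToDividedPower_mk k V,
    ker_symToDividedPower_eq_span_tprod_const k V hprime,
    finrank_ker_symToDividedPower k V hprime,
    finrank_quotient_range_symToDividedPower k V hprime⟩
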